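/- arXiv:2409.05829 — 2 statements merged into one kernel-verified Lean document; each statement's English description precedes it below -/
import Mathlib

section
/- Let (X, ω) be a symplectic vector space, i.e., a (possibly infinite-dimensional) topological vector space X with a jointly continuous antisymmetric bilinear form ω such that the induced map ω♭ : X → X', x ↦ ω(x, ·), is injective. Then every finite-dimensional linear subspace V ⊆ X satisfies V^{ωω} = V, where V^ω = {x ∈ X : ω(x, v) = 0 for all v ∈ V} denotes the symplectic orthogonal. -/
/-!
`V^ω` is the common kernel of the functionals `ω(·, v)`, `v ∈ V`, which span a finite-dimensional
subspace `Φ` of the algebraic dual. Finite-dimensional duality recovers `Φ` as the annihilator of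
its common kernel, so `x ∈ V^{ωω}` exactly when `ω(x, ·) ∈ Φ`. By antisymmetry `Φ = ω(V)`, and
injectivity of `ω♭` then gives `x ∈ V`.
-/

/-- The symplectic orthogonal of a subspace `W` with respect to a bilinear form `ω`:
`W^ω = {x | ω(x, w) = 0 for all w ∈ W}`. -/
def symplOrth {X : Type*} [AddCommGroup X] [Module ℝ X]
    (ω : X →ₗ[ℝ] X →ₗ[ℝ] ℝ) (W : Submodule ℝ X) : Submodule ℝ X where
  carrier := {x | ∀ w ∈ W, ω x w = 0}
  add_mem' := by
    intro a b ha hb w hw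
    simp [map_add, ha w hw, hb w hw]
  zero_mem' := by
    intro w hw
    simp
  smul_mem' := by
    intro c a ha w hw
    simp [map_smul, ha w hw]

section

variable {X : Type*} [AddCommGroup X] [Module ℝ X] (ω : X →ₗ[ℝ] X →ₗ[ℝ] ℝ)

theorem symplOrth_eq_comap_dualAnnihilator (W : Submodule ℝ X) :
    symplOrth ω W = W.dualAnnihilator.comap ω := by
  ext x
  simp [symplOrth, Submodule.mem_dualAnnihilator]

theorem symplOrth_eq_dualCoannihilator_map_flip (W : Submodule ℝ X) :
    symplOrth ω W = (W.map ω.flip).dualCoannihilator := by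
  ext x
  simp [symplOrth, Submodule.mem_dualCoannihilator]

theorem symplOrth_symplOrth_eq_comap_map_flip (V : Submodule ℝ X) [FiniteDimensional ℝ V] :
    symplOrth ω (symplOrth ω V) = (V.map ω.flip).comap ω := by
  rw [symplOrth_eq_comap_dualAnnihilator, symplOrth_eq_dualCoannihilator_map_flip,
    Subspace.dualCoannihilator_dualAnnihilator_eq]

theorem flip_eq_neg_of_antisymm (hskew : ∀ x y : X, ω x y = - ω y x) : ω.flip = -ω :=
  LinearMap.ext₂ fun x y => hskew y x

end

theorem finiteDimensional_subspace_symplectically_closed_general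
    {X : Type*} [AddCommGroup X] [Module ℝ X]
    (ω : X →ₗ[ℝ] X →ₗ[ℝ] ℝ)
    (hskew : ∀ x y : X, ω x y = - ω y x)
    (hinj : ∀ x : X, (∀ y : X, ω x y = 0) → x = 0)
    (V : Submodule ℝ X) (hV : FiniteDimensional ℝ V) :
    symplOrth ω (symplOrth ω V) = V := by
  have hω : Function.Injective ω :=
    (injective_iff_map_eq_zero ω).2 fun x hx => hinj x fun y => by simp [hx]
  rw [symplOrth_symplOrth_eq_comap_map_flip, flip_eq_neg_of_antisymm ω hskew, Submodule.map_neg,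
    Submodule.comap_map_eq_of_injective hω]

/-- Every finite-dimensional subspace of a symplectic vector space is symplectically
closed: `V^{ωω} = V`. -/
theorem finiteDimensional_subspace_symplectically_closed
    {X : Type*} [AddCommGroup X] [Module ℝ X] [TopologicalSpace X]
    [IsTopologicalAddGroup X] [ContinuousSMul ℝ X] [LocallyConvexSpace ℝ X]
    (ω : X →ₗ[ℝ] X →ₗ[ℝ] ℝ)
    (hcont : Continuous fun p : X × X => ω p.1 p.2)
    (hskew : ∀ x y : X, ω x y = - ω y x)
    (hinj : ∀ x : X, (∀ y : X, ω x y = 0) → x = 0)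
    (V : Submodule ℝ X) (hV : FiniteDimensional ℝ V) :
    symplOrth ω (symplOrth ω V) = V :=
  finiteDimensional_subspace_symplectically_closed_general ω hskew hinj V hV
end

section
/- Let X be a complete locally convex topological vector space with topological dual X'. If the canonical evaluation pairing X' × X → ℝ is jointly continuous for some topological vector space topology on X', then X is normable. -/
open Filter Topology Bornology Set

/-- Type synonym equipping `X` with the seminormed structure coming from a seminorm `p`. -/
def SeminormSpace (X : Type*) [AddCommGroup X] [Module ℝ X] (_p : Seminorm ℝ X) : Type _ := X

namespace SeminormSpace

variable {X : Type*} [AddCommGroup X] [Module ℝ X] {p : Seminorm ℝ X}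

instance : AddCommGroup (SeminormSpace X p) := inferInstanceAs (AddCommGroup X)
instance : Module ℝ (SeminormSpace X p) := inferInstanceAs (Module ℝ X)

noncomputable instance : SeminormedAddCommGroup (SeminormSpace X p) :=
  { (show SeminormedAddCommGroup X from
    AddGroupSeminorm.toSeminormedAddCommGroup p.toAddGroupSeminorm) with
    toAddCommGroup := inferInstanceAs (AddCommGroup X) }

noncomputable instance : NormedSpace ℝ (SeminormSpace X p) where
  toModule := inferInstanceAs (Module ℝ X)
  norm_smul_le c x := by
    change p (c • (x : X)) ≤ ‖c‖ * p (x : X)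
    exact (map_smul_eq_mul p c (show X from x)).le

/-- The identity as a linear equivalence `X ≃ₗ[ℝ] SeminormSpace X p`. -/
def equiv (p : Seminorm ℝ X) : X ≃ₗ[ℝ] SeminormSpace X p := LinearEquiv.refl ℝ X

@[simp] theorem norm_equiv (x : X) : ‖(equiv p x : SeminormSpace X p)‖ = p x := rfl

end SeminormSpace

/-- Mackey-type lemma via Banach–Steinhaus: if a set `U` is weakly bounded (every continuous
linear functional is bounded on `U`), then every continuous seminorm is bounded on `U`. -/
theorem seminorm_bounded_on_of_weakly_bounded
    {X : Type*} [AddCommGroup X] [Module ℝ X] [UniformSpace X]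
    [IsUniformAddGroup X] [ContinuousSMul ℝ X]
    (p : Seminorm ℝ X) (hp : Continuous p) {U : Set X}
    (hb : ∀ f : X →L[ℝ] ℝ, ∃ M, ∀ x ∈ U, |f x| ≤ M) :
    ∃ C, ∀ x ∈ U, p x ≤ C := by
  classical
  -- the identity `X → SeminormSpace X p` is continuous since `p` is continuous
  have hcont : Continuous fun x : X => (SeminormSpace.equiv p x : SeminormSpace X p) := by
    rw [continuous_iff_continuousAt]
    intro a
    rw [ContinuousAt, Metric.tendsto_nhds]
    intro ε hε
    have hopen : IsOpen {x : X | p (x - a) < ε} :=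
      isOpen_lt (hp.comp (continuous_id.sub continuous_const)) continuous_const
    have ha : a ∈ {x : X | p (x - a) < ε} := by simp [hε]
    filter_upwards [hopen.mem_nhds ha] with x hx
    calc dist (SeminormSpace.equiv p x) (SeminormSpace.equiv p a) = p (x - a) := by rw [dist_eq_norm]; rfl
    _ < ε := hx
  let idL : X →L[ℝ] SeminormSpace X p :=
    { toLinearMap := (SeminormSpace.equiv p).toLinearMap, cont := hcont }
  -- the family of evaluation maps indexed by `U` on the dual of `SeminormSpace X p`
  let g : U → (SeminormSpace X p →L[ℝ] ℝ) →L[ℝ] ℝ :=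
    fun x => ContinuousLinearMap.apply ℝ ℝ (SeminormSpace.equiv p (x : X))
  have hptwise : ∀ f : SeminormSpace X p →L[ℝ] ℝ, ∃ C, ∀ x : U, ‖g x f‖ ≤ C := by
    intro f
    obtain ⟨M, hM⟩ := hb (f.comp idL)
    refine ⟨max M 0, fun x => ?_⟩
    have h1 : g x f = (f.comp idL) (x : X) := rfl
    rw [h1, Real.norm_eq_abs]
    exact (hM x x.2).trans (le_max_left _ _)
  obtain ⟨C, hC⟩ := banach_steinhaus hptwise
  refine ⟨C, fun x hx => ?_⟩
  by_cases hx0 : p x = 0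
  · rw [hx0]
    exact le_trans (norm_nonneg (g ⟨x, hx⟩)) (hC ⟨x, hx⟩)
  · set xp : SeminormSpace X p := SeminormSpace.equiv p x with hxpdef
    have hxp : ‖xp‖ = p x := rfl
    have H : ∀ c : ℝ, c • xp = 0 → c • (p x : ℝ) = 0 := by
      intro c hc
      have h0 : ‖c • xp‖ = 0 := by rw [hc, norm_zero]
      rw [norm_smul, hxp] at h0
      rcases mul_eq_zero.mp h0 with h | h
      · rw [norm_eq_zero.mp h, zero_smul]
      · exact absurd h hx0
    set F := LinearPMap.mkSpanSingleton' (σ := RingHom.id ℝ) xp (p x : ℝ) H with hFdef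
    have hbound : ∀ y : F.domain, ‖F y‖ ≤ 1 * ‖(y : SeminormSpace X p)‖ := by
      rintro ⟨y, hy⟩
      have hy' : y ∈ (Submodule.span ℝ {xp} : Submodule ℝ (SeminormSpace X p)) := by
        rw [← LinearPMap.domain_mkSpanSingleton (σ := RingHom.id ℝ) xp (p x : ℝ) H]
        exact hy
      obtain ⟨c, hc⟩ := Submodule.mem_span_singleton.mp hy'
      have hsub : (⟨y, hy⟩ : F.domain) = ⟨c • xp, hc ▸ hy⟩ := Subtype.ext hc.symm
      rw [hsub, LinearPMap.mkSpanSingleton'_apply]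
      have hcoe : (((⟨c • xp, hc ▸ hy⟩ : F.domain) : SeminormSpace X p)) = c • xp := rfl
      rw [hcoe, one_mul, norm_smul, norm_smul, hxp,
        Real.norm_eq_abs (p x : ℝ), abs_of_nonneg (apply_nonneg p x), RingHom.id_apply]
    let f₀ : F.domain →L[ℝ] ℝ := LinearMap.mkContinuous F.toFun 1 hbound
    obtain ⟨g', hg'_eq, hg'_norm⟩ := exists_extension_norm_eq F.domain f₀
    have hxmem : xp ∈ F.domain := by
      rw [LinearPMap.domain_mkSpanSingleton]
      exact Submodule.mem_span_singleton_self xp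
    have hgx : g' xp = p x := by
      have h1 := hg'_eq ⟨xp, hxmem⟩
      rw [h1]
      show F ⟨xp, hxmem⟩ = (p x : ℝ)
      exact LinearPMap.mkSpanSingleton'_apply_self (σ := RingHom.id ℝ) xp (p x : ℝ) H hxmem
    have hg'le : ‖g'‖ ≤ 1 := by
      rw [hg'_norm]
      exact LinearMap.mkContinuous_norm_le F.toFun zero_le_one hbound
    calc p x = ‖g' xp‖ := by
          rw [hgx, Real.norm_eq_abs, abs_of_nonneg (apply_nonneg p x)]
    _ = ‖g ⟨x, hx⟩ g'‖ := rfl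
    _ ≤ ‖g ⟨x, hx⟩‖ * ‖g'‖ := (g ⟨x, hx⟩).le_opNorm g'
    _ ≤ C * 1 :=
        mul_le_mul (hC ⟨x, hx⟩) hg'le (norm_nonneg g')
          (le_trans (norm_nonneg _) (hC ⟨x, hx⟩))
    _ = C := mul_one C

/-- (Maissen) If `X` is a complete locally convex space such that the evaluation
pairing `X' × X → ℝ` is jointly continuous for some topological-vector-space topology
on the topological dual `X'`, then `X` is normable, i.e. `X` has a bounded neighborhood
of zero (Kolmogorov's normability criterion). -/
theorem normable_of_jointly_continuous_evaluation
    {X : Type*} [AddCommGroup X] [Module ℝ X] [UniformSpace X]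
    [IsUniformAddGroup X] [ContinuousSMul ℝ X] [LocallyConvexSpace ℝ X]
    [CompleteSpace X]
    (h : ∃ t : TopologicalSpace (X →L[ℝ] ℝ),
      @IsTopologicalAddGroup (X →L[ℝ] ℝ) t _ ∧
      @ContinuousSMul ℝ (X →L[ℝ] ℝ) _ _ t ∧
      @Continuous ((X →L[ℝ] ℝ) × X) ℝ (@instTopologicalSpaceProd _ _ t _) _
        (fun p => p.1 p.2)) :
    ∃ U ∈ nhds (0 : X), Bornology.IsVonNBounded ℝ U := by
  obtain ⟨t, htg, hts, hcont⟩ := h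
  letI := t
  haveI := htg
  haveI := hts
  -- joint continuity at `(0, 0)` gives neighborhoods `V`, `U` with `|f x| ≤ 1` on `V × U`
  have h00 : Filter.Tendsto (fun q : (X →L[ℝ] ℝ) × X => q.1 q.2)
      (𝓝 ((0 : X →L[ℝ] ℝ), (0 : X))) (𝓝 (0 : ℝ)) := by
    have := hcont.tendsto ((0 : X →L[ℝ] ℝ), (0 : X))
    simpa using this
  have hIcc : Metric.closedBall (0 : ℝ) 1 ∈ 𝓝 (0 : ℝ) := Metric.closedBall_mem_nhds 0 one_pos
  have hpre := h00 hIcc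
  rw [Filter.mem_map, nhds_prod_eq, Filter.mem_prod_iff] at hpre
  obtain ⟨V, hV, U, hU, hVU⟩ := hpre
  refine ⟨U, hU, ?_⟩
  -- `U` is weakly bounded
  have hb : ∀ f : X →L[ℝ] ℝ, ∃ M, ∀ x ∈ U, |f x| ≤ M := by
    intro f
    have hsm : Filter.Tendsto (fun c : ℝ => c • f) (𝓝 0) (𝓝 0) := by
      have hc : Continuous fun c : ℝ => c • f := continuous_id.smul continuous_const
      simpa using hc.tendsto 0
    have hmem : {c : ℝ | c • f ∈ V} ∈ 𝓝 (0 : ℝ) := hsm hV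
    obtain ⟨c, hcV, hc0⟩ : ∃ c : ℝ, c • f ∈ V ∧ c ≠ 0 := by
      have h1 : ∀ᶠ c in 𝓝[≠] (0 : ℝ), c • f ∈ V := nhdsWithin_le_nhds hmem
      obtain ⟨c, hc1, hc2⟩ := (h1.and eventually_mem_nhdsWithin).exists
      exact ⟨c, hc1, Set.mem_compl_singleton_iff.mp hc2⟩
    have hcpos : (0 : ℝ) < |c| := abs_pos.mpr hc0
    refine ⟨|c|⁻¹, fun x hx => ?_⟩
    have hpair : ((c • f, x) : (X →L[ℝ] ℝ) × X) ∈ V ×ˢ U := ⟨hcV, hx⟩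
    have h2 : |c| * |f x| ≤ 1 := by
      have := hVU hpair
      simpa [Real.dist_eq, abs_mul] using this
    calc |f x| = (|c| * |f x|) / |c| := by field_simp
    _ ≤ 1 / |c| := by gcongr
    _ = |c|⁻¹ := one_div _
  -- conclude via the gauge seminorm family and the Mackey-type lemma
  have hsem := with_gaugeSeminormFamily (𝕜 := ℝ) (E := X)
  rw [hsem.isVonNBounded_iff_seminorm_bounded]
  intro i
  have hpc : Continuous (gaugeSeminormFamily ℝ X i) := by
    apply Seminorm.continuous (r := 1)
    rw [gaugeSeminormFamily_ball]
    exact i.coe_nhds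
  obtain ⟨C, hC⟩ := seminorm_bounded_on_of_weakly_bounded (gaugeSeminormFamily ℝ X i) hpc hb
  refine ⟨max C 0 + 1, by positivity, fun x hx => ?_⟩
  exact lt_of_le_of_lt (le_trans (hC x hx) (le_max_left _ _)) (lt_add_one _)
end
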